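/- (Hellmann–Feynman theorem, variational form) Let H : ℝ → Matrix n n ℂ be a differentiable family of Hermitian matrices and ψ : ℝ → ℂⁿ a differentiable family of unit vectors such that for each a, ψ(a) is an eigenvector of H(a) with eigenvalue E(a) = ⟨ψ(a), H(a) ψ(a)⟩. Then dE/da(a) = ⟨ψ(a), (dH/da)(a) ψ(a)⟩. -/

import Mathlib

open Matrix

/-! Differentiate `E = ⟨ψ, Hψ⟩` by the product rule. Since `H` is Hermitian and `Hψ = Eψ` with
`E` real, the two terms containing `ψ'` add up to `E (⟨ψ', ψ⟩ + ⟨ψ, ψ'⟩)`, which is `E` times the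
derivative of `‖ψ‖² = 1`, hence zero; only `⟨ψ, H'ψ⟩` survives. -/

section Deriv

variable {𝕜 R : Type*} [NontriviallyNormedField 𝕜] [NormedCommRing R] [NormedAlgebra 𝕜 R]
  {m n : Type*} [Fintype n] {x : 𝕜}

theorem HasDerivAt.dotProduct {u v : 𝕜 → n → R} {u' v' : n → R}
    (hu : HasDerivAt u u' x) (hv : HasDerivAt v v' x) :
    HasDerivAt (fun a => u a ⬝ᵥ v a) (u' ⬝ᵥ v x + u x ⬝ᵥ v') x := by
  unfold _root_.dotProduct
  rw [← Finset.sum_add_distrib]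
  exact .fun_sum fun i _ => (hasDerivAt_pi.1 hu i).mul (hasDerivAt_pi.1 hv i)

theorem HasDerivAt.mulVec {M : 𝕜 → Matrix m n R} {M' : Matrix m n R} {v : 𝕜 → n → R}
    {v' : n → R} (hM : ∀ i j, HasDerivAt (fun a => M a i j) (M' i j) x)
    (hv : HasDerivAt v v' x) :
    HasDerivAt (fun a => M a *ᵥ v a) (M' *ᵥ v x + M x *ᵥ v') x :=
  hasDerivAt_pi.2 fun i => (hasDerivAt_pi.2 (hM i)).dotProduct hv

end Deriv

namespace Matrix.IsHermitian

variable {α : Type*} [CommRing α] [StarRing α] {n : Type*} [Fintype n] {A : Matrix n n α}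

theorem star_dotProduct_mulVec (hA : A.IsHermitian) (v w : n → α) :
    star v ⬝ᵥ A *ᵥ w = star (A *ᵥ v) ⬝ᵥ w := by
  rw [dotProduct_mulVec, star_mulVec, hA.eq]

theorem star_dotProduct_mulVec_add_of_mulVec_eq_smul {v : n → α} {μ : α} (hA : A.IsHermitian)
    (hv : A *ᵥ v = μ • v) (hμ : star μ = μ) (w : n → α) :
    star w ⬝ᵥ A *ᵥ v + star v ⬝ᵥ A *ᵥ w = μ * (star w ⬝ᵥ v + star v ⬝ᵥ w) := by
  rw [hA.star_dotProduct_mulVec v w, hv, star_smul, hμ, dotProduct_smul, smul_dotProduct,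
    smul_eq_mul, smul_eq_mul, mul_add]

end Matrix.IsHermitian

theorem hellmann_feynman_general
    (n : Type*) [Fintype n]
    (H : ℝ → Matrix n n ℂ) (ψ : ℝ → n → ℂ) (a₀ : ℝ)
    (hHdiff : ∀ i j, Differentiable ℝ (fun a => H a i j))
    (hψdiff : Differentiable ℝ ψ)
    (hherm : ∀ a, (H a).IsHermitian)
    (E : ℝ → ℂ)
    (hE : ∀ a, E a = dotProduct (star (ψ a)) ((H a).mulVec (ψ a)))
    (heig : ∀ a, (H a).mulVec (ψ a) = E a • ψ a)
    (hunit : ∀ a, dotProduct (star (ψ a)) (ψ a) = 1) :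
    deriv E a₀ =
      dotProduct (star (ψ a₀))
        (Matrix.mulVec (Matrix.of fun i j => deriv (fun a => H a i j) a₀) (ψ a₀)) := by
  set H' : Matrix n n ℂ := Matrix.of fun i j => deriv (fun a => H a i j) a₀
  set ψ' := deriv ψ a₀
  have hψ : HasDerivAt ψ ψ' a₀ := (hψdiff a₀).hasDerivAt
  have hHψ : HasDerivAt (fun a => H a *ᵥ ψ a) (H' *ᵥ ψ a₀ + H a₀ *ᵥ ψ') a₀ :=
    .mulVec (fun i j => (hHdiff i j a₀).hasDerivAt) hψ
  have hnorm : star ψ' ⬝ᵥ ψ a₀ + star (ψ a₀) ⬝ᵥ ψ' = 0 := by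
    have h := hψ.star.dotProduct hψ
    simp only [hunit] at h
    exact h.unique (hasDerivAt_const a₀ 1)
  have hreal : star (E a₀) = E a₀ := by
    rw [RCLike.star_def, RCLike.conj_eq_iff_im, hE]
    exact (hherm a₀).im_star_dotProduct_mulVec_self _
  have hvar := (hherm a₀).star_dotProduct_mulVec_add_of_mulVec_eq_smul (heig a₀) hreal ψ'
  rw [show E = _ from funext hE, (hψ.star.dotProduct hHψ).deriv, dotProduct_add]
  linear_combination hvar + E a₀ * hnorm

/-- Hellmann–Feynman theorem: for a differentiable family of Hermitian
matrices `H a` with differentiable unit eigenvectors `ψ a`, the derivative of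
the energy `E a = ⟨ψ a, H a (ψ a)⟩` is `⟨ψ a, H'(a) (ψ a)⟩`. -/
theorem hellmann_feynman
    (n : Type*) [Fintype n] [DecidableEq n]
    (H : ℝ → Matrix n n ℂ) (ψ : ℝ → n → ℂ) (a₀ : ℝ)
    (hHdiff : ∀ i j, Differentiable ℝ (fun a => H a i j))
    (hψdiff : Differentiable ℝ ψ)
    (hherm : ∀ a, (H a).IsHermitian)
    (E : ℝ → ℂ)
    (hE : ∀ a, E a = dotProduct (star (ψ a)) ((H a).mulVec (ψ a)))
    (heig : ∀ a, (H a).mulVec (ψ a) = E a • ψ a)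
    (hunit : ∀ a, dotProduct (star (ψ a)) (ψ a) = 1) :
    deriv E a₀ =
      dotProduct (star (ψ a₀))
        (Matrix.mulVec (Matrix.of fun i j => deriv (fun a => H a i j) a₀) (ψ a₀)) :=
  hellmann_feynman_general n H ψ a₀ hHdiff hψdiff hherm E hE heig hunit
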